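/- Let n ≥ 2 be an integer such that n + 1 is a prime number. Then the polynomial f_{1,n}(X) is irreducible in ℤ[X]. -/

import Mathlib

open Polynomial

/-!
Multiplying by `(X - 1)^2` telescopes `f1 n` to `X^(n+1) - (n+1) X + n`. Substituting `X + 1`
for `X` gives `X^2 f1 n (X + 1) = (X + 1)^(n+1) - (n+1) X - 1`, so `f1 n (X + 1)` is the monic
polynomial `Σ_{i<n} C(n+1, i+2) X^i`. For `p = n + 1` prime every non-leading coefficient is
divisible by `p`, and the constant term `C(p, 2) = p (p-1)/2` is not divisible by `p^2`, so
Eisenstein's criterion applies.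
-/

/-- `f1 n = X^(n-1) + 2 X^(n-2) + ⋯ + (n-1) X + n = Σ_{k=1}^n k · X^(n-k)` over `ℤ`. -/
noncomputable def f1 (n : ℕ) : Polynomial ℤ :=
  ∑ k ∈ Finset.Icc 1 n, C (k : ℤ) * X ^ (n - k)

lemma f1_succ (n : ℕ) : f1 (n + 1) = X * f1 n + C ((n : ℤ) + 1) := by
  rw [f1, Finset.sum_Icc_succ_top (by omega), f1, Finset.mul_sum, Nat.sub_self, pow_zero, mul_one]
  congr 1
  refine Finset.sum_congr rfl fun k hk => ?_
  rw [Nat.sub_add_comm (Finset.mem_Icc.mp hk).2, pow_succ]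
  ring

lemma X_sub_one_sq_mul_f1 (n : ℕ) :
    (X - 1) ^ 2 * f1 n = X ^ (n + 1) - C ((n : ℤ) + 1) * X + C (n : ℤ) := by
  induction n with
  | zero => simp [f1]
  | succ n ih =>
    rw [f1_succ, mul_add, mul_left_comm, ih]
    simp only [Nat.cast_add, Nat.cast_one, map_add, map_one]
    ring

noncomputable def binomTail (n : ℕ) : ℤ[X] :=
  ∑ i ∈ Finset.range n, C (((n + 1).choose (i + 2) : ℕ) : ℤ) * X ^ i

lemma coeff_binomTail (n j : ℕ) : (binomTail n).coeff j = (n + 1).choose (j + 2) := by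
  simp only [binomTail, finsetSum_coeff, coeff_C_mul_X_pow, Finset.sum_ite_eq, Finset.mem_range]
  split_ifs with hj
  · rfl
  · rw [Nat.choose_eq_zero_of_lt (by omega), Nat.cast_zero]

lemma X_sq_mul_binomTail (n : ℕ) :
    X ^ 2 * binomTail n = (X + 1) ^ (n + 1) - C ((n : ℤ) + 1) * X - 1 := by
  ext (_ | _ | j) <;>
    simp [coeff_X_pow_mul', coeff_binomTail, coeff_X_add_one_pow, coeff_one, coeff_X]

lemma taylor_one_f1 (n : ℕ) : taylor 1 (f1 n) = binomTail n := by
  have h := congrArg (taylor (1 : ℤ)) (X_sub_one_sq_mul_f1 n)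
  simp only [taylor_mul, taylor_pow, map_sub, map_add, taylor_X, taylor_C, taylor_one,
    add_sub_cancel_right] at h
  refine mul_left_cancel₀ (pow_ne_zero 2 X_ne_zero) ?_
  rw [h, X_sq_mul_binomTail]
  simp only [map_add, map_one]
  ring

lemma natDegree_binomTail_le (n : ℕ) : (binomTail n).natDegree ≤ n - 1 := by
  refine natDegree_le_iff_coeff_eq_zero.mpr fun j hj => ?_
  rw [coeff_binomTail, Nat.choose_eq_zero_of_lt (by omega), Nat.cast_zero]

lemma coeff_binomTail_sub_one {n : ℕ} (hn : n ≠ 0) : (binomTail n).coeff (n - 1) = 1 := by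
  rw [coeff_binomTail, show n - 1 + 2 = n + 1 by omega, Nat.choose_self, Nat.cast_one]

lemma binomTail_monic {n : ℕ} (hn : n ≠ 0) : (binomTail n).Monic :=
  monic_of_natDegree_le_of_coeff_eq_one _ (natDegree_binomTail_le n) (coeff_binomTail_sub_one hn)

lemma natDegree_binomTail {n : ℕ} (hn : n ≠ 0) : (binomTail n).natDegree = n - 1 :=
  natDegree_eq_of_le_of_coeff_ne_zero (natDegree_binomTail_le n)
    (by rw [coeff_binomTail_sub_one hn]; exact one_ne_zero)

lemma Nat.not_sq_dvd_choose_two {n : ℕ} (hn : n ≠ 0) : ¬ (n + 1) ^ 2 ∣ (n + 1).choose 2 := by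
  intro h
  have hdvd : (n + 1) * (n + 1) ∣ (n + 1) * n := by
    have hchoose := Nat.add_one_mul_choose_eq n 1
    rw [Nat.choose_one_right] at hchoose
    rw [← sq, hchoose]
    exact Dvd.dvd.mul_right h 2
  have := Nat.le_of_dvd (Nat.pos_of_ne_zero hn) (Nat.dvd_of_mul_dvd_mul_left (by omega) hdvd)
  omega

lemma binomTail_isEisensteinAt {n : ℕ} (hp : (n + 1).Prime) :
    (binomTail n).IsEisensteinAt (Ideal.span {((n + 1 : ℕ) : ℤ)}) := by
  have hn : n ≠ 0 := by rintro rfl; exact Nat.not_prime_one hp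
  refine (binomTail_monic hn).isEisensteinAt_of_mem_of_notMem
    (Ideal.isPrime_span_singleton_of_prime (Nat.prime_iff_prime_int.mp hp)).ne_top
    (fun {i} hi => ?_) ?_
  · rw [natDegree_binomTail hn] at hi
    rw [coeff_binomTail, Ideal.mem_span_singleton, Int.natCast_dvd_natCast]
    exact hp.dvd_choose_self (by omega) (by omega)
  · rw [coeff_binomTail, Ideal.span_singleton_pow, Ideal.mem_span_singleton, ← Nat.cast_pow,
      Int.natCast_dvd_natCast]
    exact Nat.not_sq_dvd_choose_two hn

lemma binomTail_irreducible {n : ℕ} (hn : 2 ≤ n) (hp : (n + 1).Prime) :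
    Irreducible (binomTail n) :=
  (binomTail_isEisensteinAt hp).irreducible
    (Ideal.isPrime_span_singleton_of_prime (Nat.prime_iff_prime_int.mp hp))
    (binomTail_monic (by omega)).isPrimitive (by rw [natDegree_binomTail (by omega)]; omega)

/-- If `n ≥ 2` and `n + 1` is prime, then `f1 n` is irreducible in `ℤ[X]`. -/
theorem stmt3 (n : ℕ) (hn : 2 ≤ n) (hp : (n + 1).Prime) : Irreducible (f1 n) := by
  rw [← MulEquiv.irreducible_iff (taylorEquiv (1 : ℤ))]
  exact taylor_one_f1 n ▸ binomTail_irreducible hn hp
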